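/- If G is a finite simple graph of order n, then γ_{rk}(G) · d_{rk}(G) ≤ k·n, where γ_{rk}(G) is the k-rainbow domination number and d_{rk}(G) is the k-rainbow domatic number of G. -/

import Mathlib

open SimpleGraph Finset

/-- A `k`-rainbow dominating function on a graph `H`. -/
def IsRDF {W : Type*} (H : SimpleGraph W) (k : ℕ) (f : W → Finset (Fin k)) : Prop :=
  ∀ w, f w = ∅ → ∀ c : Fin k, ∃ u, H.Adj w u ∧ c ∈ f u

/-- The weight of a rainbow dominating function. -/
noncomputable def rdfWeight {W : Type*} [Fintype W] {k : ℕ} (f : W → Finset (Fin k)) : ℕ :=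
  ∑ w, (f w).card

/-- The `k`-rainbow domination number of a graph. -/
noncomputable def rdn {W : Type*} [Fintype W] (H : SimpleGraph W) (k : ℕ) : ℕ :=
  sInf {n | ∃ f : W → Finset (Fin k), IsRDF H k f ∧ rdfWeight f = n}

/-- The middle graph of `G`, on vertex set `V(G) ⊕ E(G)`. -/
def middleGraph {V : Type*} (G : SimpleGraph V) : SimpleGraph (V ⊕ G.edgeSet) where
  Adj x y :=
    match x, y with
    | Sum.inl _, Sum.inl _ => False
    | Sum.inl v, Sum.inr e => v ∈ (e : Sym2 V)
    | Sum.inr e, Sum.inl v => v ∈ (e : Sym2 V)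
    | Sum.inr e, Sum.inr f => e ≠ f ∧ ∃ v, v ∈ (e : Sym2 V) ∧ v ∈ (f : Sym2 V)
  symm := by
    constructor
    rintro (v | e) (w | f) h
    · exact h.elim
    · exact h
    · exact h
    · exact ⟨Ne.symm h.1, h.2.imp fun v hv => ⟨hv.2, hv.1⟩⟩
  loopless := by
    constructor
    rintro (v | e) h
    · exact h.elim
    · exact h.1 rfl

/-- The middle `k`-rainbow domination number `γ*_{rk}(G)`. -/
noncomputable def mrdn {V : Type*} [Fintype V] (G : SimpleGraph V) (k : ℕ) : ℕ :=
  letI := Classical.decEq V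
  letI : DecidableRel G.Adj := fun _ _ => Classical.dec _
  rdn (middleGraph G) k

/-- The `k`-rainbow domatic number: the maximum size of a family of `k`-rainbow
dominating functions with `∑ i |f i v| ≤ k` for each vertex `v`. -/
noncomputable def rdomatic {W : Type*} (H : SimpleGraph W) (k : ℕ) : ℕ :=
  sSup {d | ∃ F : Fin d → W → Finset (Fin k), Function.Injective F ∧
    (∀ i, IsRDF H k (F i)) ∧ ∀ w, (∑ i, (F i w).card) ≤ k}

/-- The matching number `α'(G)`. -/
noncomputable def matchingNumber {V : Type*} [Fintype V] (G : SimpleGraph V) : ℕ :=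
  sSup {n | ∃ M : Finset (Sym2 V), ↑M ⊆ G.edgeSet ∧
    (∀ e ∈ M, ∀ f ∈ M, e ≠ f → ∀ v : V, ¬(v ∈ e ∧ v ∈ f)) ∧ M.card = n}

/-
Every function of a maximum `k`-rainbow dominating family has weight at least `γ_{rk}(G)`,
while the weights of all `d_{rk}(G)` functions add up to `∑_v ∑_i |f_i(v)| ≤ k·n`.
-/

section RainbowDomination

variable {W : Type*} (H : SimpleGraph W) (k : ℕ)

theorem rdn_le_rdfWeight [Fintype W] {f : W → Finset (Fin k)} (hf : IsRDF H k f) :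
    rdn H k ≤ rdfWeight f :=
  Nat.sInf_le ⟨f, hf, rfl⟩

theorem sum_rdfWeight_le [Fintype W] {ι : Type*} [Fintype ι] {F : ι → W → Finset (Fin k)}
    (hF : ∀ w, ∑ i, (F i w).card ≤ k) :
    ∑ i, rdfWeight (F i) ≤ k * Fintype.card W :=
  calc ∑ i, rdfWeight (F i) = ∑ w, ∑ i, (F i w).card := Finset.sum_comm
    _ ≤ ∑ _w : W, k := Finset.sum_le_sum fun w _ => hF w
    _ = k * Fintype.card W := by rw [sum_const, smul_eq_mul, mul_comm, card_univ]

theorem rdn_mul_le_of_rainbowFamily [Fintype W] {d : ℕ} {F : Fin d → W → Finset (Fin k)}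
    (hrdf : ∀ i, IsRDF H k (F i)) (hF : ∀ w, ∑ i, (F i w).card ≤ k) :
    rdn H k * d ≤ k * Fintype.card W :=
  calc rdn H k * d = ∑ _i : Fin d, rdn H k := by simp [mul_comm]
    _ ≤ ∑ i, rdfWeight (F i) := Finset.sum_le_sum fun i _ => rdn_le_rdfWeight H k (hrdf i)
    _ ≤ k * Fintype.card W := sum_rdfWeight_le k hF

/-- The functions of a family are distinct elements of the finite type `W → Finset (Fin k)`, so
family sizes are bounded and the supremum defining `rdomatic` is attained. -/
theorem exists_rainbowFamily_rdomatic [Finite W] :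
    ∃ F : Fin (rdomatic H k) → W → Finset (Fin k), Function.Injective F ∧
      (∀ i, IsRDF H k (F i)) ∧ ∀ w, ∑ i, (F i w).card ≤ k := by
  apply Nat.sSup_mem (s := {d | ∃ F : Fin d → W → Finset (Fin k), Function.Injective F ∧
    (∀ i, IsRDF H k (F i)) ∧ ∀ w, (∑ i, (F i w).card) ≤ k})
  · exact ⟨0, Fin.elim0, fun i => i.elim0, fun i => i.elim0, fun w => by simp⟩
  · refine ⟨Nat.card (W → Finset (Fin k)), ?_⟩
    rintro d ⟨F, hinj, -⟩
    simpa using Nat.card_le_card_of_injective F hinj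

end RainbowDomination

/-- `γ_{rk}(G) · d_{rk}(G) ≤ k·n`. -/
theorem stmt14 {V : Type*} [Fintype V] (G : SimpleGraph V) (k : ℕ) :
    rdn G k * rdomatic G k ≤ k * Fintype.card V := by
  obtain ⟨F, -, hrdf, hF⟩ := exists_rainbowFamily_rdomatic G k
  exact rdn_mul_le_of_rainbowFamily G k hrdf hF
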